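/- Let μ be a probability measure on X, ε, δ ∈ (0,1), and T(i) = ⌈(1/ε)(i·ln 2 − ln δ)⌉. Suppose in each round i = 1, …, m a (possibly adaptively chosen) measurable set V_i ⊆ X with μ(V_i) ≥ ε is tested against T(i) fresh i.i.d. samples from μ. Then the probability that at least one round's samples entirely miss its set V_i is at most δ. -/

import Mathlib

/-! Round `i` fails only if all `T(i)` samples land in `V iᶜ`, which has mass at most `1 - ε`.
By independence this happens with probability at most
`(1 - ε) ^ T(i) ≤ exp (-ε T(i)) ≤ δ / 2 ^ i`, and a union bound over the rounds gives
at most `∑ δ / 2 ^ i ≤ δ`. -/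

open MeasureTheory

lemma one_sub_pow_le_div_two_pow {ε δ : ℝ} (hε : ε ≤ 1) (hδ : 0 < δ) {n t : ℕ}
    (ht : n * Real.log 2 - Real.log δ ≤ ε * t) : (1 - ε) ^ t ≤ δ / 2 ^ n :=
  calc (1 - ε) ^ t ≤ Real.exp (-ε) ^ t :=
        pow_le_pow_left₀ (by linarith) (Real.one_sub_le_exp_neg ε) t
    _ = Real.exp (-(ε * t)) := by rw [← Real.exp_nat_mul]; ring_nf
    _ ≤ Real.exp (Real.log δ - n * Real.log 2) := Real.exp_le_exp.mpr (by linarith)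
    _ = δ / 2 ^ n := by
        rw [Real.exp_sub, Real.exp_log hδ, Real.exp_nat_mul, Real.exp_log two_pos]

lemma le_mul_of_natCast_eq_ceil_inv_mul {ε x : ℝ} (hε : 0 < ε) {t : ℕ}
    (ht : (t : ℤ) = ⌈(1 / ε) * x⌉) : x ≤ ε * t := by
  have hceil : (1 / ε) * x ≤ t := by exact_mod_cast ht ▸ Int.le_ceil ((1 / ε) * x)
  rwa [one_div, inv_mul_le_iff₀ hε] at hceil

lemma sum_fin_div_two_div_two_pow_le {a : ℝ} (ha : 0 ≤ a) (m : ℕ) :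
    ∑ i : Fin m, a / 2 / 2 ^ (i : ℕ) ≤ a := by
  rw [Fin.sum_univ_eq_sum_range (fun i => a / 2 / 2 ^ i)]
  calc ∑ i ∈ Finset.range m, a / 2 / 2 ^ i
      ≤ ∑' i : ℕ, a / 2 / 2 ^ i :=
        (summable_geometric_two' a).sum_le_tsum _ fun i _ => by positivity
    _ = a := tsum_geometric_two' a

lemma measure_compl_le_ofReal_one_sub {X : Type*} [MeasurableSpace X] {μ : Measure X}
    [IsProbabilityMeasure μ] {V : Set X} (hV : MeasurableSet V) {ε : ℝ} (hε : 0 ≤ ε)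
    (hμV : ENNReal.ofReal ε ≤ μ V) : μ Vᶜ ≤ ENNReal.ofReal (1 - ε) := by
  rw [prob_compl_eq_one_sub hV, ENNReal.ofReal_sub _ hε, ENNReal.ofReal_one]
  exact tsub_le_tsub_left hμV 1

lemma pi_univ_pi_compl_le {X ι : Type*} [Fintype ι] [MeasurableSpace X] {μ : Measure X}
    [IsProbabilityMeasure μ] {V : Set X} (hV : MeasurableSet V) {ε : ℝ} (hε : 0 ≤ ε)
    (hε1 : ε ≤ 1) (hμV : ENNReal.ofReal ε ≤ μ V) :
    Measure.pi (fun _ : ι => μ) (Set.univ.pi fun _ => Vᶜ) ≤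
      ENNReal.ofReal ((1 - ε) ^ Fintype.card ι) := by
  rw [Measure.pi_pi, Finset.prod_const, Finset.card_univ,
    ENNReal.ofReal_pow (sub_nonneg.mpr hε1)]
  exact pow_le_pow_left' (measure_compl_le_ofReal_one_sub hV hε hμV) _

lemma MeasureTheory.Measure.pi_setOf_exists_mem_le_sum {ι : Type*} [Fintype ι]
    {α : ι → Type*} [∀ i, MeasurableSpace (α i)] (ν : ∀ i, Measure (α i))
    [∀ i, IsProbabilityMeasure (ν i)]
    {s : ∀ i, Set (α i)} (hs : ∀ i, MeasurableSet (s i)) :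
    Measure.pi ν {ω | ∃ i, ω i ∈ s i} ≤ ∑ i, ν i (s i) := by
  have hunion : {ω : ∀ i, α i | ∃ i, ω i ∈ s i} = ⋃ i, Function.eval i ⁻¹' s i := by
    ext ω; simp
  rw [hunion]
  refine (measure_iUnion_fintype_le _ _).trans_eq (Finset.sum_congr rfl fun i _ => ?_)
  exact (measurePreserving_eval ν i).measure_preimage (hs i).nullMeasurableSet

theorem pacX_union_bound (X : Type*) [MeasurableSpace X] (μ : Measure X)
    [IsProbabilityMeasure μ] (ε δ : ℝ) (hε : ε ∈ Set.Ioo (0:ℝ) 1) (hδ : δ ∈ Set.Ioo (0:ℝ) 1)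
    (T : ℕ → ℕ) (hT : ∀ i : ℕ, (T i : ℤ) = ⌈(1 / ε) * (i * Real.log 2 - Real.log δ)⌉)
    (m : ℕ) (V : Fin m → Set X) (hVmeas : ∀ i, MeasurableSet (V i))
    (hVbig : ∀ i : Fin m, ENNReal.ofReal ε ≤ μ (V i)) :
    (Measure.pi (fun i : Fin m => Measure.pi (fun _ : Fin (T (i.1 + 1)) => μ)))
      {ω | ∃ i : Fin m, ∀ j : Fin (T (i.1 + 1)), ω i j ∉ V i} ≤ ENNReal.ofReal δ := by
  obtain ⟨hε0, hε1⟩ := hε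
  obtain ⟨hδ0, -⟩ := hδ
  have hround (i : Fin m) :
      Measure.pi (fun _ : Fin (T (i.1 + 1)) => μ) (Set.univ.pi fun _ => (V i)ᶜ) ≤
        ENNReal.ofReal (δ / 2 / 2 ^ i.1) := by
    refine (pi_univ_pi_compl_le (hVmeas i) hε0.le hε1.le (hVbig i)).trans
      (ENNReal.ofReal_le_ofReal ?_)
    rw [Fintype.card_fin, div_div, ← pow_succ']
    exact one_sub_pow_le_div_two_pow hε1.le hδ0
      (le_mul_of_natCast_eq_ceil_inv_mul hε0 (hT (i.1 + 1)))
  have hevent : {ω : ∀ i : Fin m, Fin (T (i.1 + 1)) → X | ∃ i, ∀ j, ω i j ∉ V i} =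
      {ω | ∃ i, ω i ∈ Set.univ.pi fun _ => (V i)ᶜ} := by
    ext ω; simp
  calc _ = _ := congrArg _ hevent
    _ ≤ _ := Measure.pi_setOf_exists_mem_le_sum _ fun i =>
        MeasurableSet.univ_pi fun _ => (hVmeas i).compl
    _ ≤ ∑ i : Fin m, ENNReal.ofReal (δ / 2 / 2 ^ i.1) := Finset.sum_le_sum fun i _ => hround i
    _ = ENNReal.ofReal (∑ i : Fin m, δ / 2 / 2 ^ i.1) :=
        (ENNReal.ofReal_sum_of_nonneg fun i _ => by positivity).symm
    _ ≤ ENNReal.ofReal δ := ENNReal.ofReal_le_ofReal (sum_fin_div_two_div_two_pow_le hδ0.le m)
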